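/- For each multi-index α ∈ ℕⁿ with |α| = k, the function Q_α(x,t) = t^{k/2} φ_α(x/(2√t)) e^{|x|²/(8t)}, defined for t > 0, is backward caloric: ΔQ_α + ∂_t Q_α = 0 on ℝⁿ × (0,∞). -/

import Mathlib

open Real Finset

/-- The one-dimensional Hermite functions
`h k x = (2^k k! sqrt π)^{-1/2} (-1)^k e^{x²/2} (d/dx)^k e^{-x²}`. -/
noncomputable def hermiteFn (k : ℕ) (x : ℝ) : ℝ :=
  (Real.sqrt (2 ^ k * (Nat.factorial k : ℝ) * Real.sqrt Real.pi))⁻¹ * (-1 : ℝ) ^ k *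
    Real.exp (x ^ 2 / 2) * iteratedDeriv k (fun y : ℝ => Real.exp (-y ^ 2)) x

/-- The n-dimensional Hermite functions `φ_α x = ∏ j, h_{α j} (x j)`. -/
noncomputable def hermiteFnN (n : ℕ) (α : Fin n → ℕ) (x : EuclideanSpace ℝ (Fin n)) : ℝ :=
  ∏ j, hermiteFn (α j) (x j)

/-- The kernel `Φ_k(x,y) = ∑_{|α| = k} φ_α(x) φ_α(y)` of the projection onto Hermite
functions of degree `k`. -/
noncomputable def PhiK (n k : ℕ) (x y : EuclideanSpace ℝ (Fin n)) : ℝ :=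
  ∑ α ∈ Finset.Nat.antidiagonalTuple n k, hermiteFnN n α x * hermiteFnN n α y

/-- The Laplacian of `f : ℝⁿ → ℝ`, as the sum of the second derivatives along the
coordinate directions. -/
noncomputable def lap (n : ℕ) (f : EuclideanSpace ℝ (Fin n) → ℝ)
    (x : EuclideanSpace ℝ (Fin n)) : ℝ :=
  ∑ j : Fin n, iteratedDeriv 2 (fun t : ℝ => f (x + t • EuclideanSpace.single j (1 : ℝ))) 0

/-- The backward caloric functions `Q_α(x,t) = t^{|α|/2} φ_α(x/(2√t)) e^{|x|²/(8t)}`. -/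
noncomputable def Qfun (n : ℕ) (α : Fin n → ℕ) (x : EuclideanSpace ℝ (Fin n)) (t : ℝ) : ℝ :=
  Real.sqrt t ^ (∑ j, α j) * hermiteFnN n α ((2 * Real.sqrt t)⁻¹ • x) *
    Real.exp (‖x‖ ^ 2 / (8 * t))


open Polynomial Topology

/-! Writing `e^{-y²}` as the standard Gaussian evaluated at `√2 y` gives
`h_k(x) = c_k (√2)^k He_k(√2 x) e^{-x²/2}`, with `He_k` the probabilists' Hermite polynomial.
In `Q_α` this Gaussian cancels against `e^{|x|²/(8t)}`, so `Q_α` is, up to a constant, the product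
over `j` of the heat polynomials `u^k He_k(x_j / u)` with `u = √(2t)` and `k = α_j`. Each of them
solves the one-dimensional backward heat equation because of the Hermite equation
`He_k'' = X He_k' - k He_k`, and a product of such functions of separate variables solves it in
`ℝⁿ`: the Leibniz rule in `t` and the Laplacian both differentiate one factor at a time. -/

namespace Polynomial

theorem derivative_hermite_succ (n : ℕ) :
    derivative (hermite (n + 1)) = (n + 1 : ℤ[X]) * hermite n := by
  induction n with
  | zero => simp
  | succ n ih =>
    rw [hermite_succ (n + 1), derivative_sub, derivative_mul, ih, derivative_mul,
      derivative_X, hermite_succ n]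
    simp only [derivative_add, derivative_natCast, derivative_one]
    push_cast
    ring

theorem derivative_derivative_hermite (n : ℕ) :
    derivative (derivative (hermite n)) = X * derivative (hermite n) - (n : ℤ[X]) * hermite n := by
  have h := congrArg derivative (hermite_succ n)
  rw [derivative_hermite_succ, derivative_sub, derivative_mul, derivative_X] at h
  linear_combination h

end Polynomial

theorem iteratedDeriv_exp_neg_sq (k : ℕ) (x : ℝ) :
    iteratedDeriv k (fun y : ℝ => exp (-y ^ 2)) x =
      (-√2) ^ k * aeval (√2 * x) (hermite k) * exp (-x ^ 2) := by
  have hscale : (fun y : ℝ => exp (-y ^ 2)) = fun y => exp (-((√2 * y) ^ 2 / 2)) := by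
    ext y
    rw [mul_pow, sq_sqrt zero_le_two]
    ring_nf
  have hgauss : ContDiff ℝ k fun u : ℝ => exp (-(u ^ 2 / 2)) := by fun_prop
  rw [hscale, iteratedDeriv_comp_const_mul hgauss, iteratedDeriv_eq_iterate]
  beta_reduce
  rw [deriv_gaussian_eq_hermite_mul_gaussian, mul_pow, sq_sqrt zero_le_two, neg_pow √2]
  ring_nf

noncomputable def hermiteNorm (k : ℕ) : ℝ := (√(2 ^ k * (Nat.factorial k : ℝ) * √π))⁻¹

theorem hermiteFn_eq_aeval_hermite (k : ℕ) (x : ℝ) :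
    hermiteFn k x = hermiteNorm k * √2 ^ k * aeval (√2 * x) (hermite k) * exp (-(x ^ 2 / 2)) := by
  have hexp : exp (x ^ 2 / 2) * exp (-x ^ 2) = exp (-(x ^ 2 / 2)) := by
    rw [← exp_add]; ring_nf
  calc hermiteFn k x
      = hermiteNorm k * ((-1) ^ k * (-1) ^ k) * √2 ^ k * aeval (√2 * x) (hermite k) *
          (exp (x ^ 2 / 2) * exp (-x ^ 2)) := by
        rw [hermiteFn, hermiteNorm, iteratedDeriv_exp_neg_sq, neg_pow]; ring
    _ = _ := by rw [← mul_pow, neg_one_mul, neg_neg, one_pow, mul_one, hexp]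

noncomputable def heatHermite (k : ℕ) (t ξ : ℝ) : ℝ :=
  √(2 * t) ^ k * aeval ((√(2 * t))⁻¹ * ξ) (hermite k)

theorem iteratedDeriv_two_aeval {R : Type*} [CommRing R] [Algebra R ℝ] (p : R[X]) :
    iteratedDeriv 2 (fun y : ℝ => aeval y p) = fun y => aeval y (derivative (derivative p)) := by
  have hderiv (q : R[X]) : deriv (fun y : ℝ => aeval y q) = fun y => aeval y (derivative q) :=
    funext fun _ => q.deriv_aeval
  rw [iteratedDeriv_succ, iteratedDeriv_one, hderiv, hderiv]

theorem iteratedDeriv_two_heatHermite (k : ℕ) (t ξ : ℝ) :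
    iteratedDeriv 2 (heatHermite k t) ξ =
      √(2 * t) ^ k * (√(2 * t))⁻¹ ^ 2 *
        aeval ((√(2 * t))⁻¹ * ξ) (derivative (derivative (hermite k))) := by
  unfold heatHermite
  rw [iteratedDeriv_const_mul_field,
    iteratedDeriv_comp_const_mul (contDiff_aeval (hermite k) 2), iteratedDeriv_two_aeval]
  ring

theorem hasDerivAt_sqrt_two_mul {t : ℝ} (ht : 0 < t) :
    HasDerivAt (fun s => √(2 * s)) (√(2 * t))⁻¹ t := by
  have h := (Real.hasDerivAt_sqrt (by positivity : 2 * t ≠ 0)).comp t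
    ((hasDerivAt_id t).const_mul 2)
  refine h.congr_deriv ?_
  field_simp

theorem heatHermite_backward_heat (k : ℕ) {t : ℝ} (ht : 0 < t) (ξ : ℝ) :
    HasDerivAt (heatHermite k · ξ) (-iteratedDeriv 2 (heatHermite k t) ξ) t := by
  have hsqrt := hasDerivAt_sqrt_two_mul ht
  have hu : √(2 * t) ≠ 0 := by positivity
  have hpow : HasDerivAt (fun s => √(2 * s) ^ k) (k * √(2 * t) ^ k * (√(2 * t))⁻¹ ^ 2) t := by
    refine (hsqrt.fun_pow k).congr_deriv ?_
    rcases Nat.eq_zero_or_pos k with rfl | hk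
    · simp
    · rw [← pow_sub_one_mul hk.ne']
      field_simp
  have harg : HasDerivAt (fun s => (√(2 * s))⁻¹ * ξ) (-((√(2 * t))⁻¹ ^ 3 * ξ)) t := by
    refine ((hsqrt.fun_inv hu).mul_const ξ).congr_deriv ?_
    field_simp
  have hherm := ((hermite k).hasDerivAt_aeval _).comp t harg
  rw [iteratedDeriv_two_heatHermite, derivative_derivative_hermite]
  refine (hpow.mul hherm).congr_deriv ?_
  simp only [Function.comp_apply, map_sub, map_mul, aeval_X, map_natCast]
  ring

noncomputable def qFactor (k : ℕ) (t ξ : ℝ) : ℝ :=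
  √t ^ k * hermiteFn k ((2 * √t)⁻¹ * ξ) * exp (ξ ^ 2 / (8 * t))

theorem Qfun_eq_prod_qFactor (n : ℕ) (α : Fin n → ℕ) (z : EuclideanSpace ℝ (Fin n)) (t : ℝ) :
    Qfun n α z t = ∏ j, qFactor (α j) t (z j) := by
  have hnorm : ‖z‖ ^ 2 = ∑ j, z j ^ 2 := by
    simp [EuclideanSpace.norm_sq_eq]
  rw [Qfun, hermiteFnN, hnorm, sum_div, exp_sum, ← prod_pow_eq_pow_sum, ← prod_mul_distrib,
    ← prod_mul_distrib]
  simp [qFactor]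

theorem qFactor_eq_heatHermite (k : ℕ) {t : ℝ} (ht : 0 < t) :
    qFactor k t = fun ξ => hermiteNorm k * heatHermite k t ξ := by
  ext ξ
  have hsqrt : √(2 * t) = √2 * √t := sqrt_mul zero_le_two t
  have harg : √2 * ((2 * √t)⁻¹ * ξ) = (√(2 * t))⁻¹ * ξ := by
    have : √t ≠ 0 := by positivity
    rw [hsqrt]
    field_simp
    rw [sq_sqrt zero_le_two]
  have hexp : exp (-(((2 * √t)⁻¹ * ξ) ^ 2 / 2)) * exp (ξ ^ 2 / (8 * t)) = 1 := by
    rw [← exp_add, ← exp_zero]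
    congr 1
    rw [mul_pow, inv_pow, mul_pow, sq_sqrt ht.le]
    ring
  rw [qFactor, hermiteFn_eq_aeval_hermite, heatHermite, harg, hsqrt, mul_pow √2 √t k]
  linear_combination (hermiteNorm k * √2 ^ k * √t ^ k * aeval ((√2 * √t)⁻¹ * ξ) (hermite k)) * hexp

theorem qFactor_backward_heat (k : ℕ) {t : ℝ} (ht : 0 < t) (ξ : ℝ) :
    HasDerivAt (qFactor k · ξ) (-iteratedDeriv 2 (qFactor k t) ξ) t := by
  have heq : (qFactor k · ξ) =ᶠ[𝓝 t] fun s => hermiteNorm k * heatHermite k s ξ :=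
    (eventually_gt_nhds ht).mono fun s hs => congrFun (qFactor_eq_heatHermite k hs) ξ
  rw [qFactor_eq_heatHermite k ht, iteratedDeriv_const_mul_field, ← mul_neg]
  exact ((heatHermite_backward_heat k ht ξ).const_mul _).congr_of_eventuallyEq heq

theorem lap_prod (n : ℕ) (f : Fin n → ℝ → ℝ) (x : EuclideanSpace ℝ (Fin n)) :
    lap n (fun z => ∏ j, f j (z j)) x =
      ∑ j, (∏ i ∈ univ.erase j, f i (x i)) * iteratedDeriv 2 (f j) (x j) := by
  refine sum_congr rfl fun j _ => ?_
  have hline : (fun s : ℝ => ∏ i, f i ((x + s • EuclideanSpace.single j (1 : ℝ)) i)) =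
      fun s => (∏ i ∈ univ.erase j, f i (x i)) * f j (x j + s) := by
    ext s
    rw [← mul_prod_erase univ _ (mem_univ j), mul_comm]
    congr 1
    · exact prod_congr rfl fun i hi => by simp [ne_of_mem_erase hi]
    · simp
  rw [hline, iteratedDeriv_const_mul_field, iteratedDeriv_comp_const_add]
  simp only [add_zero]

theorem Qfun_backward_caloric (n : ℕ) (α : Fin n → ℕ)
    (x : EuclideanSpace ℝ (Fin n)) (t : ℝ) (ht : 0 < t) :
    lap n (fun z => Qfun n α z t) x + deriv (Qfun n α x) t = 0 := by
  have hspace : (fun z => Qfun n α z t) = fun z => ∏ j, qFactor (α j) t (z j) :=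
    funext fun z => Qfun_eq_prod_qFactor n α z t
  have htime : HasDerivAt (Qfun n α x)
      (∑ j, (∏ i ∈ univ.erase j, qFactor (α i) t (x i)) *
        -iteratedDeriv 2 (qFactor (α j) t) (x j)) t := by
    have h := HasDerivAt.fun_finsetProd (u := univ) fun j _ => qFactor_backward_heat (α j) ht (x j)
    simpa only [← Qfun_eq_prod_qFactor, smul_eq_mul] using h
  rw [hspace, lap_prod, htime.deriv, ← sum_add_distrib]
  simp only [mul_neg, add_neg_cancel, sum_const_zero]
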